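/- Let a1 > 0, a2 > 0 and let θ_1, …, θ_k be distributed according to the multiplicative inverse gamma prior with parameters (a1, a2). Then for every m with 0 < m < a1 and 0 < m < a2, and every h ∈ {1, …, k−1}, the difference of consecutive m-th moments satisfies E(θ_{h+1}^m) − E(θ_h^m) = (Γ(a1 − m)/Γ(a1)) · (Γ(a2 − m)/Γ(a2))^{h−1} · (Γ(a2 − m)/Γ(a2) − 1). -/

import Mathlib

/-! The substitution `x ↦ 1/x` turns the `m`-th moment of `Inv-Ga(a, b)` into a Gamma
integral, `b ^ m Γ(a - m) / Γ(a)` for `m < a`. The `ϑ_l` are independent and almost surely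
positive, so the `m`-th moment of `θ_h = ∏ ϑ_l` is the product of the moments of its factors,
`Γ(a1 - m) / Γ(a1) · (Γ(a2 - m) / Γ(a2)) ^ (h - 1)`, and consecutive such products differ by
the claimed factor. -/

open MeasureTheory ProbabilityTheory Real Filter Set

/-- Density of the inverse gamma distribution `Inv-Ga(a, b)`: equal to
`b^a / Γ(a) · x^{-(a+1)} · e^{-b/x}` for `x > 0` and `0` otherwise. -/
noncomputable def invGammaPDF (a b : ℝ) (x : ℝ) : ℝ :=
  if 0 < x then b ^ a / Real.Gamma a * x ^ (-(a + 1)) * Real.exp (-b / x) else 0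

/-- The inverse gamma distribution `Inv-Ga(a, b)` as a measure on `ℝ`. -/
noncomputable def invGammaMeasure (a b : ℝ) : Measure ℝ :=
  MeasureTheory.volume.withDensity (fun x => ENNReal.ofReal (invGammaPDF a b x))

lemma measurable_invGammaPDF (a b : ℝ) : Measurable (invGammaPDF a b) :=
  Measurable.ite measurableSet_Ioi (by fun_prop) (by fun_prop)

lemma invGammaMeasure_Iic_zero (a b : ℝ) : invGammaMeasure a b (Iic 0) = 0 := by
  rw [invGammaMeasure, withDensity_apply _ measurableSet_Iic,
    setLIntegral_congr_fun measurableSet_Iic fun x (hx : x ≤ 0) => by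
      rw [invGammaPDF, if_neg hx.not_gt, ENNReal.ofReal_zero]]
  simp

lemma invGammaPDF_nonneg {a b : ℝ} (ha : 0 < a) (hb : 0 ≤ b) (x : ℝ) :
    0 ≤ invGammaPDF a b x := by
  unfold invGammaPDF
  split_ifs
  · have := Gamma_pos_of_pos ha
    positivity
  · rfl

lemma integral_invGammaMeasure {a b : ℝ} (ha : 0 < a) (hb : 0 ≤ b) (f : ℝ → ℝ) :
    ∫ x, f x ∂invGammaMeasure a b =
      ∫ x in Ioi 0, b ^ a / Gamma a * x ^ (-(a + 1)) * exp (-b / x) * f x := by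
  rw [invGammaMeasure, integral_withDensity_eq_integral_toReal_smul
    (measurable_invGammaPDF a b).ennreal_ofReal (ae_of_all _ fun _ => ENNReal.ofReal_lt_top),
    ← integral_indicator measurableSet_Ioi]
  congr 1 with x
  rw [ENNReal.toReal_ofReal (invGammaPDF_nonneg ha hb x), smul_eq_mul, invGammaPDF]
  split_ifs with hx
  · rw [indicator_of_mem (show x ∈ Ioi 0 from hx)]
  · rw [indicator_of_notMem (show x ∉ Ioi 0 from hx), zero_mul]

lemma integral_rpow_invGammaMeasure {a b m : ℝ} (ha : 0 < a) (hb : 0 < b) (hma : m < a) :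
    ∫ x, x ^ m ∂invGammaMeasure a b = b ^ m * Gamma (a - m) / Gamma a := by
  have hsubst : ∀ x ∈ Ioi (0 : ℝ), (|(-1 : ℝ)| * x ^ ((-1 : ℝ) - 1)) •
      (b ^ a / Gamma a * (x ^ (-1 : ℝ)) ^ (-(a + 1)) * exp (-b / x ^ (-1 : ℝ)) *
        (x ^ (-1 : ℝ)) ^ m) = b ^ a / Gamma a * (x ^ (a - m - 1) * exp (-(b * x))) := by
    intro x (hx : 0 < x)
    rw [smul_eq_mul, ← rpow_mul hx.le, ← rpow_mul hx.le, rpow_neg_one, div_inv_eq_mul,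
      abs_neg, abs_one, one_mul, neg_mul b x]
    have : x ^ ((-1 : ℝ) - 1) * x ^ (-1 * -(a + 1)) * x ^ (-1 * m) = x ^ (a - m - 1) := by
      rw [← rpow_add hx, ← rpow_add hx]; ring_nf
    linear_combination (b ^ a / Gamma a * exp (-(b * x))) * this
  have hpow : b ^ a * (1 / b) ^ (a - m) = b ^ m := by
    rw [one_div, inv_rpow hb.le, ← rpow_neg hb.le, ← rpow_add hb]; ring_nf
  calc ∫ x, x ^ m ∂invGammaMeasure a b
      = ∫ x in Ioi 0, b ^ a / Gamma a * x ^ (-(a + 1)) * exp (-b / x) * x ^ m :=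
        integral_invGammaMeasure ha hb.le _
    _ = ∫ x in Ioi 0, b ^ a / Gamma a * (x ^ (a - m - 1) * exp (-(b * x))) := by
        rw [← integral_comp_rpow_Ioi _ (by norm_num : (-1 : ℝ) ≠ 0)]
        exact setIntegral_congr_fun measurableSet_Ioi hsubst
    _ = b ^ m * Gamma (a - m) / Gamma a := by
        rw [integral_const_mul, integral_rpow_mul_exp_neg_mul_Ioi (by linarith) hb, ← hpow]
        ring

section

variable {Ω : Type*} [MeasurableSpace Ω] {μ : Measure Ω}

lemma ae_pos_of_map_eq_invGammaMeasure {X : Ω → ℝ} {a b : ℝ} (hX : Measurable X)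
    (hlaw : μ.map X = invGammaMeasure a b) :
    ∀ᵐ ω ∂μ, 0 < X ω := by
  have hnull : μ (X ⁻¹' Iic 0) = 0 := by
    rw [← Measure.map_apply hX measurableSet_Iic, hlaw, invGammaMeasure_Iic_zero]
  filter_upwards [measure_eq_zero_iff_ae_notMem.mp hnull] with ω hω
  simpa using hω

lemma integral_rpow_of_map_eq_invGammaMeasure {X : Ω → ℝ} {a b m : ℝ} (ha : 0 < a)
    (hb : 0 < b) (hma : m < a) (hX : Measurable X) (hlaw : μ.map X = invGammaMeasure a b) :
    ∫ ω, X ω ^ m ∂μ = b ^ m * Gamma (a - m) / Gamma a := by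
  rw [← integral_rpow_invGammaMeasure ha hb hma, ← hlaw,
    integral_map hX.aemeasurable (by fun_prop)]

lemma ProbabilityTheory.iIndepFun.integral_finset_prod_rpow {ι : Type*} {X : ι → Ω → ℝ}
    (hindep : iIndepFun X μ) (hX : ∀ i, AEMeasurable (X i) μ) (s : Finset ι)
    (hnonneg : ∀ i ∈ s, ∀ᵐ ω ∂μ, 0 ≤ X i ω) (m : ℝ) :
    ∫ ω, (∏ i ∈ s, X i ω) ^ m ∂μ = ∏ i ∈ s, ∫ ω, X i ω ^ m ∂μ := by
  have hsplit : ∀ᵐ ω ∂μ, (∏ i ∈ s, X i ω) ^ m = ∏ i ∈ s, X i ω ^ m := by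
    filter_upwards [(eventually_all_finset s).mpr hnonneg] with ω hω
    exact (finsetProd_rpow s _ hω m).symm
  rw [integral_congr_ae hsplit, ← Finset.prod_coe_sort s (fun i => ∫ ω, X i ω ^ m ∂μ)]
  simp_rw [← Finset.prod_coe_sort s (fun i => X i _ ^ m)]
  exact (hindep.precomp Subtype.val_injective).integral_fun_prod_comp (fun i => hX i)
    (fun _ => (measurable_id.pow_const m).aestronglyMeasurable)

lemma integral_rpow_prod_range_succ_of_multiplicativeInvGamma {a1 a2 m : ℝ} (ha1 : 0 < a1)
    (ha2 : 0 < a2) (hma1 : m < a1) (hma2 : m < a2)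
    {ϑ : ℕ → Ω → ℝ} (hmeas : ∀ l, Measurable (ϑ l)) (hindep : iIndepFun ϑ μ)
    (hlaw1 : μ.map (ϑ 0) = invGammaMeasure a1 1)
    (hlaw2 : ∀ l, 1 ≤ l → μ.map (ϑ l) = invGammaMeasure a2 1) (n : ℕ) :
    ∫ ω, (∏ l ∈ Finset.range (n + 1), ϑ l ω) ^ m ∂μ =
      Gamma (a1 - m) / Gamma a1 * (Gamma (a2 - m) / Gamma a2) ^ n := by
  have hmoment : ∀ l, ∫ ω, ϑ (l + 1) ω ^ m ∂μ = Gamma (a2 - m) / Gamma a2 := fun l => by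
    rw [integral_rpow_of_map_eq_invGammaMeasure ha2 one_pos hma2 (hmeas _)
      (hlaw2 _ l.succ_pos), one_rpow, one_mul]
  have hpos : ∀ l, ∀ᵐ ω ∂μ, 0 < ϑ l ω
    | 0 => ae_pos_of_map_eq_invGammaMeasure (hmeas 0) hlaw1
    | l + 1 => ae_pos_of_map_eq_invGammaMeasure (hmeas _) (hlaw2 _ l.succ_pos)
  rw [hindep.integral_finset_prod_rpow (fun l => (hmeas l).aemeasurable) _
      (fun l _ => (hpos l).mono fun _ => le_of_lt) m,
    Finset.prod_range_succ', integral_rpow_of_map_eq_invGammaMeasure ha1 one_pos hma1 (hmeas 0)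
      hlaw1, Finset.prod_congr rfl fun l _ => hmoment l, Finset.prod_const, Finset.card_range,
    one_rpow, one_mul, mul_comm]

end

theorem multiplicative_inverse_gamma_moment_difference_general
    {Ω : Type*} [MeasureSpace Ω]
    (a1 a2 : ℝ) (ha1 : 0 < a1) (ha2 : 0 < a2)
    (k : ℕ) (ϑ : ℕ → Ω → ℝ)
    (hmeas : ∀ l, Measurable (ϑ l))
    (hindep : iIndepFun ϑ ℙ)
    (hlaw1 : Measure.map (ϑ 0) ℙ = invGammaMeasure a1 1)
    (hlaw2 : ∀ l, 1 ≤ l → Measure.map (ϑ l) ℙ = invGammaMeasure a2 1)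
    (m : ℝ) (hma1 : m < a1) (hma2 : m < a2) :
    ∀ h, 1 ≤ h → h ≤ k - 1 →
      (∫ ω, (∏ l ∈ Finset.range (h + 1), ϑ l ω) ^ m ∂ℙ) -
          ∫ ω, (∏ l ∈ Finset.range h, ϑ l ω) ^ m ∂ℙ =
        Real.Gamma (a1 - m) / Real.Gamma a1 *
          (Real.Gamma (a2 - m) / Real.Gamma a2) ^ (h - 1) *
          (Real.Gamma (a2 - m) / Real.Gamma a2 - 1) := by
  rintro h hh -
  obtain ⟨n, rfl⟩ : ∃ n, h = n + 1 := ⟨h - 1, by omega⟩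
  simp only [integral_rpow_prod_range_succ_of_multiplicativeInvGamma ha1 ha2 hma1 hma2 hmeas
    hindep hlaw1 hlaw2, Nat.add_sub_cancel]
  ring

/-- difference of consecutive `m`-th moments of the multiplicative inverse
gamma prior. -/
theorem multiplicative_inverse_gamma_moment_difference
    {Ω : Type*} [MeasureSpace Ω] [IsProbabilityMeasure (ℙ : Measure Ω)]
    (a1 a2 : ℝ) (ha1 : 0 < a1) (ha2 : 0 < a2)
    (k : ℕ) (ϑ : ℕ → Ω → ℝ)
    (hmeas : ∀ l, Measurable (ϑ l))
    (hindep : iIndepFun ϑ ℙ)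
    (hlaw1 : Measure.map (ϑ 0) ℙ = invGammaMeasure a1 1)
    (hlaw2 : ∀ l, 1 ≤ l → Measure.map (ϑ l) ℙ = invGammaMeasure a2 1)
    (m : ℝ) (hm0 : 0 < m) (hma1 : m < a1) (hma2 : m < a2) :
    ∀ h, 1 ≤ h → h ≤ k - 1 →
      (∫ ω, (∏ l ∈ Finset.range (h + 1), ϑ l ω) ^ m ∂ℙ) -
          ∫ ω, (∏ l ∈ Finset.range h, ϑ l ω) ^ m ∂ℙ =
        Real.Gamma (a1 - m) / Real.Gamma a1 *
          (Real.Gamma (a2 - m) / Real.Gamma a2) ^ (h - 1) *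
          (Real.Gamma (a2 - m) / Real.Gamma a2 - 1) :=
  multiplicative_inverse_gamma_moment_difference_general a1 a2 ha1 ha2 k ϑ hmeas hindep hlaw1 hlaw2
    m hma1 hma2
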